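/- For x, y in the unit ball 𝔹ⁿ, the distance ratio metric and the hyperbolic metric satisfy (1/2) ρ_{𝔹ⁿ}(x,y) ≤ j_{𝔹ⁿ}(x,y) ≤ ρ_{𝔹ⁿ}(x,y). -/

import Mathlib

/-!
Write `r = ‖x‖ ≥ q = ‖y‖` and `t = ‖x - y‖`, so that `j = log u` with `u = 1 + t / (1 - r)` and
`ρ = 2 arsinh s` with `s = t / √((1 - r²)(1 - q²))`. Comparing through `sinh`, the two bounds
become `(√u - 1/√u)/2 ≤ s ≤ (u - 1/u)/2`, i.e. elementary inequalities in `r, q, t`, which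
follow from the triangle inequalities `r - q ≤ t ≤ r + q`.
-/

open Real Set Metric

/-- The hyperbolic metric of the unit ball:
`sinh(ρ(x,y)/2) = |x−y| / (√(1−|x|²)√(1−|y|²))`. -/
noncomputable def rhoBall {n : ℕ} (x y : EuclideanSpace ℝ (Fin n)) : ℝ :=
  2 * Real.arsinh (dist x y / (Real.sqrt (1 - ‖x‖ ^ 2) * Real.sqrt (1 - ‖y‖ ^ 2)))

/-- The distance ratio metric of the unit ball. -/
noncomputable def jBall {n : ℕ} (x y : EuclideanSpace ℝ (Fin n)) : ℝ :=
  Real.log (1 + dist x y / min (1 - ‖x‖) (1 - ‖y‖))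

namespace Real

lemma arsinh_le_log {s u : ℝ} (hu : 0 < u) (h : s ≤ (u - u⁻¹) / 2) : arsinh s ≤ log u := by
  rw [← arsinh_sinh (log u), sinh_log hu]
  exact arsinh_le_arsinh.2 h

lemma log_le_arsinh {s u : ℝ} (hu : 0 < u) (h : (u - u⁻¹) / 2 ≤ s) : log u ≤ arsinh s := by
  rw [← arsinh_sinh (log u), sinh_log hu]
  exact arsinh_le_arsinh.2 h

end Real

section

variable {r q t : ℝ}

lemma arsinh_div_sqrt_mul_sqrt_le_log (hq : 0 ≤ q) (hqr : q ≤ r) (hr : r < 1)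
    (ht : 0 ≤ t) (htr : t ≤ r + q) :
    arsinh (t / (√(1 - r ^ 2) * √(1 - q ^ 2))) ≤ log (1 + t / (1 - r)) := by
  have hr' : 0 < 1 - r := by linarith
  have hr2 : 0 < 1 - r ^ 2 := by nlinarith
  have hA : 1 - r ^ 2 ≤ √(1 - r ^ 2) * √(1 - q ^ 2) := by
    calc 1 - r ^ 2 = √(1 - r ^ 2) * √(1 - r ^ 2) := (mul_self_sqrt hr2.le).symm
      _ ≤ √(1 - r ^ 2) * √(1 - q ^ 2) := by gcongr
  apply arsinh_le_log (by positivity)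
  calc t / (√(1 - r ^ 2) * √(1 - q ^ 2)) ≤ t / (1 - r ^ 2) := by gcongr
    _ ≤ _ := by
      rw [div_le_iff₀ hr2]
      field_simp
      -- the difference of the two sides is a positive multiple of `t (1 - r) (2r - t)`
      nlinarith [mul_nonneg (mul_nonneg ht hr'.le) (by linarith : 0 ≤ 2 * r - t)]

lemma log_le_two_mul_arsinh_div_sqrt_mul_sqrt (hr0 : 0 ≤ r) (hr : r < 1) (hq0 : 0 ≤ q)
    (hq : q < 1) (ht : 0 ≤ t) (hrq : r - q ≤ t) :
    log (1 + t / (1 - r)) ≤ 2 * arsinh (t / (√(1 - r ^ 2) * √(1 - q ^ 2))) := by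
  have hr' : 0 < 1 - r := by linarith
  have hu : 0 < 1 + t / (1 - r) := by positivity
  set w := √(1 + t / (1 - r)) with hw
  have hw0 : 0 < w := sqrt_pos.2 hu
  have hw2 : w ^ 2 = 1 + t / (1 - r) := sq_sqrt hu.le
  have hA0 : 0 < √(1 - r ^ 2) * √(1 - q ^ 2) := by
    apply mul_pos <;> apply sqrt_pos.2 <;> nlinarith
  have hA : √(1 - r ^ 2) * √(1 - q ^ 2) ≤ 2 * (1 - r) * w := by
    rw [← pow_le_pow_iff_left₀ hA0.le (by positivity) two_ne_zero, mul_pow, mul_pow,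
      sq_sqrt (by nlinarith), sq_sqrt (by nlinarith), hw2]
    field_simp
    -- `(1 - r²)(1 - q²) ≤ 4 (1 - r)(1 - q) ≤ 4 (1 - r)(1 - r + t)`
    have hrq' : 0 ≤ (1 - r) * (1 - q) := mul_nonneg hr'.le (by linarith)
    nlinarith [mul_nonneg hrq' (by nlinarith : (0:ℝ) ≤ 4 - (1 + r) * (1 + q)),
      mul_nonneg hr'.le (by linarith : (0:ℝ) ≤ t - (r - q))]
  rw [← sq_sqrt hu.le, ← hw, log_pow, Nat.cast_ofNat]
  gcongr
  apply log_le_arsinh hw0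
  calc (w - w⁻¹) / 2 = t / (2 * (1 - r) * w) := by
        field_simp
        rw [hw2]
        field_simp
        ring
    _ ≤ _ := by gcongr

end

lemma rhoBall_comm {n : ℕ} (x y : EuclideanSpace ℝ (Fin n)) : rhoBall x y = rhoBall y x := by
  rw [rhoBall, rhoBall, dist_comm, mul_comm √(1 - ‖x‖ ^ 2)]

lemma jBall_comm {n : ℕ} (x y : EuclideanSpace ℝ (Fin n)) : jBall x y = jBall y x := by
  rw [jBall, jBall, dist_comm, min_comm]

theorem half_rho_le_j_le_rho_general {n : ℕ}
    (x y : EuclideanSpace ℝ (Fin n))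
    (hx : x ∈ ball (0 : EuclideanSpace ℝ (Fin n)) 1)
    (hy : y ∈ ball (0 : EuclideanSpace ℝ (Fin n)) 1) :
    (1 / 2) * rhoBall x y ≤ jBall x y ∧ jBall x y ≤ rhoBall x y := by
  rw [mem_ball_zero_iff] at hx hy
  wlog hyx : ‖y‖ ≤ ‖x‖ generalizing x y
  · rw [rhoBall_comm, jBall_comm]
    exact this y x hy hx (le_of_not_ge hyx)
  rw [jBall, min_eq_left (by linarith), rhoBall]
  constructor
  · rw [one_div, inv_mul_cancel_left₀ two_ne_zero]
    exact arsinh_div_sqrt_mul_sqrt_le_log (norm_nonneg y) hyx hx dist_nonneg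
      (dist_le_norm_add_norm x y)
  · exact log_le_two_mul_arsinh_div_sqrt_mul_sqrt (norm_nonneg x) hx (norm_nonneg y) hy
      dist_nonneg (dist_eq_norm x y ▸ norm_sub_norm_le x y)

/-- For `x, y ∈ 𝔹ⁿ`, `(1/2) ρ(x,y) ≤ j(x,y) ≤ ρ(x,y)`. -/
theorem half_rho_le_j_le_rho {n : ℕ} (hn : 2 ≤ n)
    (x y : EuclideanSpace ℝ (Fin n))
    (hx : x ∈ ball (0 : EuclideanSpace ℝ (Fin n)) 1)
    (hy : y ∈ ball (0 : EuclideanSpace ℝ (Fin n)) 1) :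
    (1 / 2) * rhoBall x y ≤ jBall x y ∧ jBall x y ≤ rhoBall x y :=
  half_rho_le_j_le_rho_general x y hx hy
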